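/- The critical points y = −2 and y = ±i√2 of R₂ are eventually mapped onto the repelling fixed point 4: R₂(−2) = 4, R₂(i√2) = 0, R₂(−i√2) = 0, R₂(0) = 4, and R₂(4) = 4. Hence the forward orbits of −2 and ±i√2 land on a repelling fixed point, so these critical points belong to the Julia set of R₂. -/

import Mathlib

open Complex

/-- The exact RG map of the 3-state Potts model on the two-dimensional
(`b = 2`) diamond hierarchical lattice. -/
noncomputable def pottsR2 (y : ℂ) : ℂ := ((y ^ 2 + 2) / (2 * y + 1)) ^ 2

theorem hasDerivAt_pottsR2 {y : ℂ} (h : 2 * y + 1 ≠ 0) :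
    HasDerivAt pottsR2 (4 * (y ^ 2 + 2) * (y + 2) * (y - 1) / (2 * y + 1) ^ 3) y := by
  have hnum : HasDerivAt (fun y : ℂ => y ^ 2 + 2) (2 * y) y := by
    simpa using (hasDerivAt_pow 2 y).add_const 2
  have hden : HasDerivAt (fun y : ℂ => 2 * y + 1) 2 y := by
    simpa using ((hasDerivAt_id y).const_mul 2).add_const 1
  refine ((hnum.fun_div hden h).fun_pow 2).congr_deriv ?_
  push_cast
  field_simp
  ring

theorem deriv_pottsR2 {y : ℂ} (h : 2 * y + 1 ≠ 0) :
    deriv pottsR2 y = 4 * (y ^ 2 + 2) * (y + 2) * (y - 1) / (2 * y + 1) ^ 3 :=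
  (hasDerivAt_pottsR2 h).deriv

theorem two_mul_add_one_ne_zero_of_sq_eq_neg_two {z : ℂ} (hz : z ^ 2 = -2) :
    2 * z + 1 ≠ 0 := by
  intro h
  rw [show z = -1 / 2 by linear_combination h / 2] at hz
  norm_num at hz

theorem pottsR2_eq_zero_of_sq_eq_neg_two {z : ℂ} (hz : z ^ 2 = -2) : pottsR2 z = 0 := by
  simp [pottsR2, hz]

theorem deriv_pottsR2_eq_zero_of_sq_eq_neg_two {z : ℂ} (hz : z ^ 2 = -2) :
    deriv pottsR2 z = 0 := by
  rw [deriv_pottsR2 (two_mul_add_one_ne_zero_of_sq_eq_neg_two hz), hz]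
  ring

theorem I_mul_sqrt_two_sq : (I * (Real.sqrt 2 : ℂ)) ^ 2 = -2 := by
  rw [mul_pow, I_sq, ← ofReal_pow, Real.sq_sqrt zero_le_two]
  norm_num

theorem deriv_pottsR2_four : deriv pottsR2 4 = 16 / 9 := by
  rw [deriv_pottsR2 (by norm_num)]
  norm_num

/-- The critical points `y = −2` and `y = ±i√2` of `R₂` (where `R₂′` vanishes)
are eventually mapped onto `y = 4`, which is a repelling fixed point
(`R₂(4) = 4`, `|R₂′(4)| > 1`): `R₂(−2) = 4`, `R₂(±i√2) = 0`, `R₂(0) = 4`.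
Hence the forward orbits of these critical points land on a repelling fixed
point, so they belong to the Julia set of `R₂`. -/
theorem stmt_19 :
    deriv pottsR2 (-2) = 0 ∧
    deriv pottsR2 (Complex.I * Real.sqrt 2) = 0 ∧
    deriv pottsR2 (-(Complex.I * Real.sqrt 2)) = 0 ∧
    pottsR2 (-2) = 4 ∧
    pottsR2 (Complex.I * Real.sqrt 2) = 0 ∧
    pottsR2 (-(Complex.I * Real.sqrt 2)) = 0 ∧
    pottsR2 0 = 4 ∧
    pottsR2 4 = 4 ∧
    1 < ‖deriv pottsR2 4‖ := by
  have hplus := I_mul_sqrt_two_sq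
  have hminus : (-(I * (Real.sqrt 2 : ℂ))) ^ 2 = -2 := by rw [neg_sq, hplus]
  refine ⟨?_, deriv_pottsR2_eq_zero_of_sq_eq_neg_two hplus,
    deriv_pottsR2_eq_zero_of_sq_eq_neg_two hminus, by norm_num [pottsR2],
    pottsR2_eq_zero_of_sq_eq_neg_two hplus, pottsR2_eq_zero_of_sq_eq_neg_two hminus,
    by norm_num [pottsR2], by norm_num [pottsR2], ?_⟩
  · rw [deriv_pottsR2 (by norm_num)]
    ring
  · rw [deriv_pottsR2_four]
    norm_num
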